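/- Let d ≥ 1, t ∈ ℕ, and ν ∈ (0,1). If r > 0 is chosen by r² = (1-ν)(d+2)/(t(t+d)), then the normalized Jacobi polynomial P̃_t^{(d/2, d/2-1)}(cos φ) ≥ ν for all 0 ≤ φ ≤ r. -/

import Mathlib

open Real

noncomputable section

/-- Generalized binomial coefficient via the Gamma function. -/
noncomputable def rbinom (x y : ℝ) : ℝ :=
  Real.Gamma (x+1) / (Real.Gamma (y+1) * Real.Gamma (x-y+1))

/-- The Jacobi polynomial `P_t^{(α,β)}`, normalized by `P_t^{(α,β)}(1) = binom(t+α,t)`. -/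
noncomputable def jacobiP (α β : ℝ) (t : ℕ) (u : ℝ) : ℝ :=
  ∑ s ∈ Finset.range (t+1),
    rbinom ((t:ℝ)+α) ((t:ℝ)-(s:ℝ)) * rbinom ((t:ℝ)+β) (s:ℝ) * ((u-1)/2)^s * ((u+1)/2)^(t-s)

/-- The normalized Jacobi polynomial `P̃_t^{(α,β)} = P_t^{(α,β)} / P_t^{(α,β)}(1)`. -/
noncomputable def njacobi (α β : ℝ) (t : ℕ) (u : ℝ) : ℝ :=
  jacobiP α β t u / jacobiP α β t 1


private lemma gamma_ne {x : ℝ} (hx : 0 < x) : Real.Gamma x ≠ 0 :=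
  (Real.Gamma_pos_of_pos hx).ne'

private lemma rbinom_pos {x y : ℝ} (hx : 0 < x+1) (hy : 0 < y+1) (hxy : 0 < x-y+1) :
    0 < rbinom x y :=
  div_pos (Real.Gamma_pos_of_pos hx)
    (mul_pos (Real.Gamma_pos_of_pos hy) (Real.Gamma_pos_of_pos hxy))

private lemma rbinom_zero {x : ℝ} (hx : 0 < x + 1) : rbinom x 0 = 1 := by
  unfold rbinom
  rw [zero_add, Real.Gamma_one, one_mul, sub_zero, div_self (gamma_ne hx)]

private lemma rbinom_succ {x y : ℝ} (hy : 0 ≤ y) (hxy : 0 < x - y) :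
    rbinom x (y+1) = rbinom x y * ((x-y)/(y+1)) := by
  unfold rbinom
  have h1 : x - (y+1) + 1 = x - y := by ring
  have h2 : Real.Gamma (y+1+1) = (y+1) * Real.Gamma (y+1) :=
    Real.Gamma_add_one (by positivity)
  have h3 : Real.Gamma (x-y+1) = (x-y) * Real.Gamma (x-y) := Real.Gamma_add_one hxy.ne'
  rw [h1, h2, h3]
  have g1 := gamma_ne (show (0:ℝ) < y+1 by linarith)
  have g2 := gamma_ne hxy
  field_simp

private lemma rbinom_pred {x y : ℝ} (hy : 0 < y) (hxy : 0 < x - y + 1) :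
    rbinom x (y-1) = rbinom x y * (y/(x-y+1)) := by
  unfold rbinom
  have h1 : y - 1 + 1 = y := by ring
  have h2 : x - (y-1) + 1 = (x-y+1) + 1 := by ring
  have h3 : Real.Gamma ((x-y+1)+1) = (x-y+1) * Real.Gamma (x-y+1) :=
    Real.Gamma_add_one hxy.ne'
  have h4 : Real.Gamma (y+1) = y * Real.Gamma y := Real.Gamma_add_one hy.ne'
  rw [h1, h2, h3, h4]
  have g1 := gamma_ne hy
  have g2 := gamma_ne hxy
  field_simp

private lemma alt_tail_nonneg (g : ℕ → ℝ) (he : ∀ s, Even s → 0 ≤ g s)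
    (hp : ∀ s, Even s → 0 ≤ g s + g (s+1)) :
    ∀ n, 0 ≤ ∑ s ∈ Finset.Ico 2 n, g s := by
  intro n
  induction n using Nat.strong_induction_on with
  | _ n ih =>
    match n, ih with
    | 0, _ => simp
    | 1, _ => simp
    | 2, _ => simp
    | (m+3), ih =>
      rcases Nat.even_or_odd m with hm | hm
      · rw [Finset.sum_Ico_succ_top (by omega : 2 ≤ m+2)]
        have h1 := ih (m+2) (by omega)
        have h2 : Even (m+2) := by
          rcases hm with ⟨k, hk⟩; exact ⟨k+1, by omega⟩
        have := he (m+2) h2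
        linarith
      · have h2m : 2 ≤ m + 1 := by
          rcases hm with ⟨k, hk⟩; omega
        rw [Finset.sum_Ico_succ_top (by omega : 2 ≤ m+2),
            Finset.sum_Ico_succ_top h2m]
        have h1 := ih (m+1) (by omega)
        have h2 : Even (m+1) := by
          rcases hm with ⟨k, hk⟩; exact ⟨k+1, by omega⟩
        have := hp (m+1) h2
        have hmm : m + 1 + 1 = m + 2 := by omega
        rw [hmm] at this
        linarith


set_option maxHeartbeats 2000000 in
theorem jacobi_concentration (d t : ℕ) (hd : 1 ≤ d) (ν r : ℝ) (hν : ν ∈ Set.Ioo (0:ℝ) 1)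
    (hr : 0 < r) (hr2 : r^2 = (1 - ν) * ((d:ℝ) + 2) / ((t:ℝ) * ((t:ℝ) + d)))
    (φ : ℝ) (hφ0 : 0 ≤ φ) (hφr : φ ≤ r) :
    ν ≤ njacobi ((d:ℝ)/2) ((d:ℝ)/2 - 1) t (Real.cos φ) := by
  obtain ⟨hν0, hν1⟩ := hν
  have ht : 1 ≤ t := by
    by_contra h
    push_neg at h
    interval_cases t
    · norm_num at hr2
      nlinarith
  have hd1 : (1:ℝ) ≤ d := by exact_mod_cast hd
  have ht1 : (1:ℝ) ≤ t := by exact_mod_cast ht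
  set α : ℝ := (d:ℝ)/2 with hα
  set β : ℝ := (d:ℝ)/2 - 1 with hβ
  have htt : (0:ℝ) < t * ((t:ℝ) + d) := by nlinarith
  have hr2pos : 0 < r^2 := by positivity
  have hr32 : r^2 ≤ 3/2 := by
    rw [hr2, div_le_iff₀ htt]
    nlinarith
  have hφ2 : φ^2 ≤ r^2 := by nlinarith
  have hcos : 1 - φ^2/2 ≤ Real.cos φ := Real.one_sub_sq_div_two_le_cos
  set q : ℝ := (1 - Real.cos φ)/2 with hq
  set p : ℝ := (1 + Real.cos φ)/2 with hp
  have hcos1 := Real.cos_le_one φ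
  have hcosm1 := Real.neg_one_le_cos φ
  have hq0 : 0 ≤ q := by rw [hq]; linarith
  have hq1 : q ≤ 1 := by rw [hq]; linarith
  have hp0 : 0 ≤ p := by rw [hp]; linarith
  have hp1 : p ≤ 1 := by rw [hp]; linarith
  have hpq : p = 1 - q := by rw [hp, hq]; ring
  have hphalf : 1/2 ≤ p := by rw [hp]; nlinarith
  have hqr : q ≤ r^2/4 := by rw [hq]; nlinarith
  have hqkey : (t:ℝ) * ((t:ℝ)+d) * q ≤ (1-ν)*((d:ℝ)+2)/4 := by
    have h1 : (t:ℝ) * ((t:ℝ)+d) * q ≤ (t:ℝ) * ((t:ℝ)+d) * (r^2/4) :=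
      mul_le_mul_of_nonneg_left hqr htt.le
    rw [hr2] at h1
    calc (t:ℝ) * ((t:ℝ)+d) * q ≤ (t:ℝ) * ((t:ℝ)+d) * ((1-ν)*((d:ℝ)+2)/((t:ℝ)*((t:ℝ)+d))/4) := h1
      _ = (1-ν)*((d:ℝ)+2)/4 := by field_simp
  -- the coefficient functions
  set A : ℕ → ℝ := fun s => rbinom ((t:ℝ)+α) ((t:ℝ)-(s:ℝ)) with hA
  set B : ℕ → ℝ := fun s => rbinom ((t:ℝ)+β) (s:ℝ) with hB
  have hApos : ∀ s : ℕ, s ≤ t → 0 < A s := by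
    intro s hs
    have hs' : (s:ℝ) ≤ t := by exact_mod_cast hs
    have hs0 : (0:ℝ) ≤ s := Nat.cast_nonneg s
    have h1 : (0:ℝ) < ((t:ℝ)+α)+1 := by rw [hα]; linarith
    have h2 : (0:ℝ) < ((t:ℝ)-(s:ℝ))+1 := by linarith
    have h3 : (0:ℝ) < ((t:ℝ)+α)-((t:ℝ)-(s:ℝ))+1 := by rw [hα]; linarith
    exact rbinom_pos h1 h2 h3
  have hBpos : ∀ s : ℕ, s ≤ t → 0 < B s := by
    intro s hs
    have hs' : (s:ℝ) ≤ t := by exact_mod_cast hs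
    have hs0 : (0:ℝ) ≤ s := Nat.cast_nonneg s
    have h1 : (0:ℝ) < ((t:ℝ)+β)+1 := by rw [hβ]; linarith
    have h2 : (0:ℝ) < (s:ℝ)+1 := by linarith
    have h3 : (0:ℝ) < ((t:ℝ)+β)-(s:ℝ)+1 := by rw [hβ]; linarith
    exact rbinom_pos h1 h2 h3
  have hAstep : ∀ s : ℕ, s+1 ≤ t → A (s+1) = A s * (((t:ℝ)-s)/(α+s+1)) := by
    intro s hs
    have hs' : (s:ℝ)+1 ≤ t := by exact_mod_cast hs
    have hs0 : (0:ℝ) ≤ s := Nat.cast_nonneg s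
    have h1 : ((t:ℝ) - ((s:ℕ)+1:ℕ)) = ((t:ℝ)-(s:ℝ)) - 1 := by push_cast; ring
    have h2 : ((t:ℝ)+α) - ((t:ℝ)-(s:ℝ)) + 1 = α+s+1 := by ring
    have hy : (0:ℝ) < (t:ℝ)-(s:ℝ) := by linarith
    have hxy : (0:ℝ) < ((t:ℝ)+α) - ((t:ℝ)-(s:ℝ)) + 1 := by rw [hα]; linarith
    show rbinom ((t:ℝ)+α) ((t:ℝ)-(((s:ℕ)+1:ℕ):ℝ)) = rbinom ((t:ℝ)+α) ((t:ℝ)-(s:ℝ)) * (((t:ℝ)-s)/(α+s+1))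
    rw [h1, rbinom_pred hy hxy, h2]
  have hBstep : ∀ s : ℕ, s+1 ≤ t → B (s+1) = B s * (((t:ℝ)+β-s)/((s:ℝ)+1)) := by
    intro s hs
    have hs' : (s:ℝ)+1 ≤ t := by exact_mod_cast hs
    have hs0 : (0:ℝ) ≤ s := Nat.cast_nonneg s
    have h1 : (((s:ℕ)+1:ℕ):ℝ) = (s:ℝ) + 1 := by push_cast; ring
    have hxy : (0:ℝ) < ((t:ℝ)+β) - (s:ℝ) := by rw [hβ]; linarith
    show rbinom ((t:ℝ)+β) ((((s:ℕ)+1:ℕ):ℕ):ℝ) = rbinom ((t:ℝ)+β) (s:ℝ) * (((t:ℝ)+β-s)/((s:ℝ)+1))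
    rw [h1, rbinom_succ hs0 hxy]
  -- the pair inequality
  have hpair : ∀ s : ℕ, s+1 ≤ t →
      A (s+1) * B (s+1) * q^(s+1) * p^(t-(s+1)) ≤ A s * B s * q^s * p^(t-s) := by
    intro s hs
    have hs' : (s:ℝ)+1 ≤ t := by exact_mod_cast hs
    have hs0 : (0:ℝ) ≤ s := Nat.cast_nonneg s
    have hAs := hApos s (by omega)
    have hBs := hBpos s (by omega)
    have hd1' : 0 < α + (s:ℝ) + 1 := by rw [hα]; linarith
    have hd2' : 0 < (s:ℝ) + 1 := by linarith
    have hcore : (((t:ℝ)-s)*((t:ℝ)+β-s)) * q ≤ ((α+s+1)*((s:ℝ)+1)) * p := by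
      have hts : (0:ℝ) ≤ (t:ℝ) - s := by linarith
      have htbs0 : (0:ℝ) ≤ (t:ℝ)+β-s := by rw [hβ]; linarith
      have htbs : (t:ℝ)+β-s ≤ (t:ℝ)+d := by rw [hβ]; linarith
      have h1 : ((t:ℝ)-s)*((t:ℝ)+β-s) ≤ (t:ℝ)*((t:ℝ)+d) :=
        mul_le_mul (by linarith) htbs htbs0 (by linarith)
      have h2 : (((t:ℝ)-s)*((t:ℝ)+β-s)) * q ≤ (t:ℝ)*((t:ℝ)+d) * q := by
        apply mul_le_mul_of_nonneg_right h1 hq0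
      have h3 : (1-ν)*((d:ℝ)+2)/4 ≤ ((α+s+1)*((s:ℝ)+1)) * p := by
        have c1 : ((d:ℝ)+2)/2 ≤ (α+s+1)*((s:ℝ)+1) := by
          rw [hα]; nlinarith
        have c2 : ((d:ℝ)+2)/2 * (1/2) ≤ (α+s+1)*((s:ℝ)+1) * p := by
          apply mul_le_mul c1 hphalf (by norm_num) (by positivity)
        nlinarith
      linarith
    have key : ((t:ℝ)-s)/(α+s+1) * (((t:ℝ)+β-s)/((s:ℝ)+1)) * q ≤ p := by
      rw [div_mul_div_comm, div_mul_eq_mul_div, div_le_iff₀ (by positivity)]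
      calc ((t:ℝ)-s)*((t:ℝ)+β-s) * q ≤ ((α+s+1)*((s:ℝ)+1)) * p := hcore
        _ = p * ((α+s+1)*((s:ℝ)+1)) := by ring
    have hexp : t - s = (t - (s+1)) + 1 := by omega
    rw [hAstep s hs, hBstep s hs, hexp, pow_succ p, pow_succ q]
    have hprod : 0 ≤ A s * B s * q^s * p^(t-(s+1)) := by positivity
    calc A s * (((t:ℝ)-s)/(α+s+1)) * (B s * (((t:ℝ)+β-s)/((s:ℝ)+1))) * (q^s * q) * p^(t-(s+1))
        = (A s * B s * q^s * p^(t-(s+1))) * (((t:ℝ)-s)/(α+s+1) * (((t:ℝ)+β-s)/((s:ℝ)+1)) * q) := by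
          ring
      _ ≤ (A s * B s * q^s * p^(t-(s+1))) * p := mul_le_mul_of_nonneg_left key hprod
      _ = A s * B s * q^s * (p^(t-(s+1)) * p) := by ring
  -- B 0 = 1
  have hB0 : B 0 = 1 := by
    rw [hB]
    simp only [Nat.cast_zero]
    exact rbinom_zero (by rw [hβ]; linarith)
  -- head bound : ν * A 0 ≤ A 0 * B 0 * p^t - A 1 * B 1 * q * p^(t-1)
  have hA0 := hApos 0 (by omega)
  have hhead : ν * A 0 ≤ A 0 * B 0 * q^0 * p^(t-0) - A 1 * B 1 * q^1 * p^(t-1) := by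
    have e1 : A 1 = A 0 * (((t:ℝ)-0)/(α+0+1)) := by
      have := hAstep 0 (by omega); simpa using this
    have e2 : B 1 = B 0 * (((t:ℝ)+β-0)/((0:ℝ)+1)) := by
      have := hBstep 0 (by omega); simpa using this
    have hpt : 1 - (t:ℝ)*q ≤ p^t := by
      have := one_add_mul_le_pow (show (-2:ℝ) ≤ -q by linarith) t
      rw [hpq]
      calc 1 - (t:ℝ)*q = 1 + (t:ℝ)*(-q) := by ring
        _ ≤ (1 + -q)^t := this
        _ = (1-q)^t := by ring_nf
    have hpt1 : p^(t-1) ≤ 1 := pow_le_one₀ hp0 hp1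
    have hcoef : 0 ≤ (t:ℝ) * ((t:ℝ)+β) * q := by
      apply mul_nonneg _ hq0
      rw [hβ]; nlinarith
    -- key numeric inequality
    have hnum : ν * (α+1) ≤ (α+1) * p^t - (t:ℝ)*((t:ℝ)+β) * q * p^(t-1) := by
      have h1 : (t:ℝ)*((t:ℝ)+β) * q * p^(t-1) ≤ (t:ℝ)*((t:ℝ)+β) * q := by
        calc (t:ℝ)*((t:ℝ)+β) * q * p^(t-1) ≤ (t:ℝ)*((t:ℝ)+β) * q * 1 :=
          mul_le_mul_of_nonneg_left hpt1 hcoef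
          _ = (t:ℝ)*((t:ℝ)+β) * q := by ring
      have h2 : (α+1) * (1 - (t:ℝ)*q) ≤ (α+1) * p^t := by
        apply mul_le_mul_of_nonneg_left hpt (by rw [hα]; linarith)
      -- (α+1)(1-tq) - t(t+β) q = (α+1) - q t (t+d) ≥ (α+1) - (1-ν)(d+2)/4 ≥ ν(α+1)
      have h3 : (α+1)*(1 - (t:ℝ)*q) - (t:ℝ)*((t:ℝ)+β)*q = (α+1) - (t:ℝ)*((t:ℝ)+d)*q := by
        rw [hα, hβ]; ring
      have h4 : ν * (α+1) ≤ (α+1) - (1-ν)*((d:ℝ)+2)/4 := by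
        rw [hα]; nlinarith
      nlinarith [hqkey]
    rw [e1, e2, hB0]
    have hα1 : (0:ℝ) < α+1 := by rw [hα]; linarith
    have goal_eq : A 0 * 1 * q^0 * p^(t-0) - A 0 * (((t:ℝ)-0)/(α+0+1)) * (1 * (((t:ℝ)+β-0)/((0:ℝ)+1))) * q^1 * p^(t-1)
        = A 0 / (α+1) * ((α+1) * p^t - (t:ℝ)*((t:ℝ)+β) * q * p^(t-1)) := by
      rw [Nat.sub_zero]
      have hα2 : α + 1 ≠ 0 := hα1.ne'
      field_simp
      have h3 : (1+α)⁻¹ * (1+α) = 1 := inv_mul_cancel₀ (by linarith)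
      linear_combination (-(p^(t-1) * (t:ℝ) * q * (β + t))) * h3
    rw [goal_eq]
    calc ν * A 0 = A 0 / (α+1) * (ν * (α+1)) := by field_simp
      _ ≤ A 0 / (α+1) * ((α+1) * p^t - (t:ℝ)*((t:ℝ)+β) * q * p^(t-1)) := by
          apply mul_le_mul_of_nonneg_left hnum (by positivity)
  -- capped term function
  set G : ℕ → ℝ := fun s => if s ≤ t then A s * B s * (-q)^s * p^(t-s) else 0 with hG
  have hGe : ∀ s, Even s → 0 ≤ G s := by
    intro s hs
    rw [hG]
    simp only
    split
    · rename_i h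
      have : (-q)^s = q^s := by
        rw [hs.neg_pow]
      rw [this]
      have := hApos s h
      have := hBpos s h
      positivity
    · exact le_rfl
  have hGval : ∀ s, s ≤ t → G s = A s * B s * (-q)^s * p^(t-s) := by
    intro s hst
    rw [hG]
    simp only
    rw [if_pos hst]
  have hGp : ∀ s, Even s → 0 ≤ G s + G (s+1) := by
    intro s hs
    by_cases h1 : s + 1 ≤ t
    · rw [hGval s (by omega), hGval (s+1) h1]
      have e1 : (-q)^s = q^s := hs.neg_pow q
      have e2 : (-q)^(s+1) = -(q^(s+1)) := by rw [pow_succ, e1]; ring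
      rw [e1, e2]
      nlinarith [hpair s h1]
    · by_cases h2 : s ≤ t
      · have h0 := hGe s hs
        have hz : G (s+1) = 0 := by rw [hG]; simp only; rw [if_neg h1]
        rw [hz, add_zero]; exact h0
      · have hz1 : G s = 0 := by rw [hG]; simp only; rw [if_neg h2]
        have hz2 : G (s+1) = 0 := by rw [hG]; simp only; rw [if_neg (by omega)]
        rw [hz1, hz2]; norm_num
  have hsum : jacobiP α β t (Real.cos φ) = ∑ s ∈ Finset.range (t+1), G s := by
    unfold jacobiP
    apply Finset.sum_congr rfl
    intro s hs
    have hst : s ≤ t := by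
      have := Finset.mem_range.mp hs; omega
    rw [hGval s hst]
    have e1 : (Real.cos φ - 1)/2 = -q := by rw [hq]; ring
    have e2 : (Real.cos φ + 1)/2 = p := by rw [hp]; ring
    rw [e1, e2]
  have hdecomp : ∑ s ∈ Finset.range (t+1), G s
      = G 0 + (G 1 + ∑ s ∈ Finset.Ico 2 (t+1), G s) := by
    rw [Finset.range_eq_Ico, Finset.sum_eq_sum_Ico_succ_bot (by omega : 0 < t+1)]
    congr 1
    rw [Finset.sum_eq_sum_Ico_succ_bot (by omega : 1 < t+1)]
  have htail := alt_tail_nonneg G hGe hGp (t+1)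
  have hG0 : G 0 = A 0 * B 0 * q^0 * p^(t-0) := by
    rw [hGval 0 (by omega)]; norm_num
  have hG1 : G 1 = -(A 1 * B 1 * q^1 * p^(t-1)) := by
    rw [hGval 1 ht]; ring
  have hlow : ν * A 0 ≤ jacobiP α β t (Real.cos φ) := by
    rw [hsum, hdecomp, hG0, hG1]
    linarith [hhead, htail]
  have hj1 : jacobiP α β t 1 = A 0 := by
    unfold jacobiP
    rw [Finset.sum_eq_single 0]
    · show rbinom ((t:ℝ)+α) ((t:ℝ)-((0:ℕ):ℝ)) * rbinom ((t:ℝ)+β) ((0:ℕ):ℝ)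
        * (((1:ℝ)-1)/2)^(0:ℕ) * (((1:ℝ)+1)/2)^(t-0) = A 0
      have hb0 : rbinom ((t:ℝ)+β) ((0:ℕ):ℝ) = 1 := by
        rw [Nat.cast_zero]
        exact rbinom_zero (by rw [hβ]; linarith)
      rw [hb0, hA]
      norm_num
    · intro b hb hb0
      have : ((1:ℝ)-1)/2 = 0 := by norm_num
      rw [this, zero_pow hb0]
      ring
    · intro h
      exact absurd (Finset.mem_range.mpr (by omega)) h
  have hA0 := hApos 0 (by omega)
  unfold njacobi
  rw [hj1, le_div_iff₀ hA0]
  calc ν * A 0 ≤ jacobiP α β t (Real.cos φ) := hlow
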